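/- If F is an acyclic graph (forest) on n vertices, then α_4(F) ≥ 3n/4, where α_4 denotes the generalized 4-independence number. -/

import Mathlib

/-- `S` is a generalized `k`-independent set of `G`: the induced subgraph `G[S]` contains no
tree on `k` vertices as a subgraph, equivalently every connected component of `G[S]` has
fewer than `k` vertices, equivalently every connected induced subgraph inside `S` has
fewer than `k` vertices. -/
def SimpleGraph.IsGenIndepSet {V : Type*} (G : SimpleGraph V) (k : ℕ) (S : Finset V) : Prop :=
  ∀ T : Finset V, T ⊆ S → (G.induce (T : Set V)).Connected → T.card < k

/-- The generalized `k`-independence number `α_k(G)`, the maximum cardinality of a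
generalized `k`-independent set. -/
noncomputable def SimpleGraph.genIndepNum {V : Type*} (G : SimpleGraph V) (k : ℕ) : ℕ :=
  sSup {n | ∃ S : Finset V, G.IsGenIndepSet k S ∧ S.card = n}

/-!
Induction on a vertex set `A` of the forest. If `A` is not generalized 4-independent, pick a
"branch" `K` hanging from a single vertex `u ∈ A` (no other edges from `K` to `A`) with
`|K| ≥ 3` and `|K|` minimal. Minimality forces every component of `G[K]` to have at most three
vertices, so `K` can be added to a solution for `A \ (K ∪ {u})`, and `|K| ≥ 3 (|K| + 1) / 4`.
-/

namespace SimpleGraph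

open Finset

variable {V : Type*} {G : SimpleGraph V}

theorem IsAcyclic.eq_of_adj_of_walk (hG : G.IsAcyclic) {u a b : V} (ha : G.Adj u a)
    (hb : G.Adj u b) (p : G.Walk a b) (hu : u ∉ p.support) : a = b := by
  have hbridge := isBridge_iff_forall_walk_mem_edges.mp
    (isAcyclic_iff_forall_adj_isBridge.mp hG ha) (Walk.cons hb p.reverse)
  rw [Walk.edges_cons, List.mem_cons] at hbridge
  rcases hbridge with h | h
  · rcases Sym2.eq_iff.mp h with ⟨-, hab⟩ | ⟨hub, -⟩
    exacts [hab, absurd hub hb.ne]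
  · exact absurd (by simpa using p.reverse.fst_mem_support_of_mem_edges h) hu

theorem Connected.exists_walk_support_subset_of_induce {T : Set V} (hT : (G.induce T).Connected)
    {a b : V} (ha : a ∈ T) (hb : b ∈ T) : ∃ p : G.Walk a b, ∀ v ∈ p.support, v ∈ T := by
  obtain ⟨p⟩ := hT.preconnected ⟨a, ha⟩ ⟨b, hb⟩
  refine ⟨p.map ⟨Subtype.val, id⟩, fun v hv => ?_⟩
  rw [Walk.support_map, List.mem_map] at hv
  obtain ⟨⟨x, hx⟩, -, rfl⟩ := hv
  exact hx

theorem IsGenIndepSet.union [DecidableEq V] {k : ℕ} {S K : Finset V}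
    (hS : G.IsGenIndepSet k S) (hK : G.IsGenIndepSet k K)
    (hSK : ∀ x ∈ K, ∀ y ∈ S, ¬ G.Adj x y) : G.IsGenIndepSet k (S ∪ K) := by
  intro T hT hconn
  suffices T ⊆ S ∨ T ⊆ K by
    rcases this with h | h
    exacts [hS T h hconn, hK T h hconn]
  by_contra! ⟨hTS, hTK⟩
  obtain ⟨a, haT, haS⟩ := not_subset.mp hTS
  obtain ⟨b, hbT, hbK⟩ := not_subset.mp hTK
  have haK : a ∈ K := (mem_union.mp (hT haT)).resolve_left haS
  obtain ⟨p, hp⟩ := hconn.exists_walk_support_subset_of_induce (mem_coe.mpr haT) (mem_coe.mpr hbT)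
  obtain ⟨d, hd, hdK, hdK'⟩ := p.exists_boundary_dart K haK hbK
  have hdS : d.snd ∈ S :=
    (mem_union.mp (hT (hp _ (p.dart_snd_mem_support_of_mem_darts hd)))).resolve_right hdK'
  exact hSK _ hdK _ hdS d.adj

theorem exists_closed_superset_of_connected_induce {K T : Finset V} (hTK : T ⊆ K)
    (hT : (G.induce (T : Set V)).Connected) :
    ∃ C ⊆ K, T ⊆ C ∧ (∀ x ∈ C, ∀ y ∈ K, G.Adj x y → y ∈ C) ∧
      ∀ a ∈ C, ∀ b ∈ C, ∃ p : G.Walk a b, ∀ v ∈ p.support, v ∈ K := by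
  classical
  obtain ⟨⟨t, ht⟩⟩ := hT.nonempty
  refine ⟨K.filter fun x => ∃ p : G.Walk t x, ∀ v ∈ p.support, v ∈ K, filter_subset _ _,
    fun x hx => ?_, fun x hx y hy hxy => ?_, fun a ha b hb => ?_⟩
  · obtain ⟨p, hp⟩ := hT.exists_walk_support_subset_of_induce ht (mem_coe.mpr hx)
    exact mem_filter.mpr ⟨hTK hx, p, fun v hv => hTK (hp v hv)⟩
  · obtain ⟨-, p, hp⟩ := mem_filter.mp hx
    refine mem_filter.mpr ⟨hy, p.concat hxy, fun v hv => ?_⟩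
    rw [Walk.support_concat, List.mem_append, List.mem_singleton] at hv
    rcases hv with hv | rfl
    exacts [hp v hv, hy]
  · obtain ⟨-, p, hp⟩ := mem_filter.mp ha
    obtain ⟨q, hq⟩ := (mem_filter.mp hb).2
    refine ⟨p.reverse.append q, fun v hv => ?_⟩
    rw [Walk.mem_support_append_iff, Walk.support_reverse, List.mem_reverse] at hv
    exact hv.elim (hp v) (hq v)

/-- `K` is a union of connected components of `G[A \ {u}]`. -/
structure IsBranch (G : SimpleGraph V) (A : Finset V) (u : V) (K : Finset V) : Prop where
  mem : u ∈ A
  notMem : u ∉ K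
  subset : K ⊆ A
  adj_mem : ∀ x ∈ K, ∀ y ∈ A, G.Adj x y → y ∈ K ∨ y = u

theorem exists_isBranch_of_four_le_card [DecidableEq V] {A : Finset V} (hA : 4 ≤ A.card) :
    ∃ u K, G.IsBranch A u K ∧ 3 ≤ K.card := by
  obtain ⟨u, hu⟩ := card_pos.mp (by omega : 0 < A.card)
  refine ⟨u, A.erase u, ⟨hu, notMem_erase u A, erase_subset u A, fun x _ y hy _ => ?_⟩, ?_⟩
  · exact (em (y = u)).symm.imp_left (mem_erase_of_ne_of_mem · hy)
  · rw [card_erase_of_mem hu]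
    omega

/-- Take the component `C` of `G[K]` containing `T`; by acyclicity `u` has at most one neighbour
`w` in `C`, and `C \ {w}` is a smaller branch attached at `w`. -/
theorem IsBranch.exists_smaller (hG : G.IsAcyclic) {A K T : Finset V} {u : V}
    (hK : G.IsBranch A u K) (hTK : T ⊆ K) (hT : (G.induce (T : Set V)).Connected)
    (hT4 : 4 ≤ T.card) : ∃ w K', G.IsBranch A w K' ∧ 3 ≤ K'.card ∧ K'.card < K.card := by
  classical
  obtain ⟨C, hCK, hTC, hCclosed, hCwalk⟩ := exists_closed_superset_of_connected_induce hTK hT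
  have hC4 : 4 ≤ C.card := hT4.trans (card_le_card hTC)
  have hunique : ∃ w ∈ C, ∀ x ∈ C, G.Adj u x → x = w := by
    by_cases hadj : ∃ w ∈ C, G.Adj u w
    · obtain ⟨w, hw, huw⟩ := hadj
      refine ⟨w, hw, fun x hx hux => ?_⟩
      obtain ⟨p, hp⟩ := hCwalk x hx w hw
      exact hG.eq_of_adj_of_walk hux huw p fun hu => hK.notMem (hp u hu)
    · push Not at hadj
      obtain ⟨w, hw⟩ := card_pos.mp (by omega : 0 < C.card)
      exact ⟨w, hw, fun x hx hux => absurd hux (hadj x hx)⟩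
  obtain ⟨w, hwC, huw⟩ := hunique
  refine ⟨w, C.erase w, ⟨hK.subset (hCK hwC), notMem_erase w C,
    (erase_subset w C).trans (hCK.trans hK.subset), fun x hx y hy hxy => ?_⟩, ?_, ?_⟩
  · obtain ⟨hxw, hxC⟩ := mem_erase.mp hx
    rcases hK.adj_mem x (hCK hxC) y hy hxy with hyK | rfl
    · exact (em (y = w)).symm.imp_left (mem_erase_of_ne_of_mem · (hCclosed x hxC y hyK hxy))
    · exact absurd (huw x hxC hxy.symm) hxw
  · rw [card_erase_of_mem hwC]
    omega
  · exact (card_erase_lt_of_mem hwC).trans_le (card_le_card hCK)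

theorem IsBranch.exists_isGenIndepSet (hG : G.IsAcyclic) {A K : Finset V} {u : V}
    (hK : G.IsBranch A u K) (hK3 : 3 ≤ K.card) :
    ∃ w K', G.IsBranch A w K' ∧ 3 ≤ K'.card ∧ G.IsGenIndepSet 4 K' := by
  induction hn : K.card using Nat.strong_induction_on generalizing u K with
  | _ n ih =>
    by_cases hind : G.IsGenIndepSet 4 K
    · exact ⟨u, K, hK, hK3, hind⟩
    obtain ⟨T, hTK, hT, hT4⟩ : ∃ T ⊆ K, (G.induce (T : Set V)).Connected ∧ 4 ≤ T.card := by
      simpa [IsGenIndepSet] using hind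
    obtain ⟨w, K', hK', hK'3, hlt⟩ := hK.exists_smaller hG hTK hT hT4
    exact ih _ (hn ▸ hlt) hK' hK'3 rfl

theorem IsAcyclic.exists_isGenIndepSet_subset (hG : G.IsAcyclic) (A : Finset V) :
    ∃ S ⊆ A, G.IsGenIndepSet 4 S ∧ 3 * A.card ≤ 4 * S.card := by
  classical
  induction A using Finset.strongInduction with
  | H A ih =>
    by_cases hA : G.IsGenIndepSet 4 A
    · exact ⟨A, Subset.rfl, hA, by omega⟩
    obtain ⟨T, hTA, -, hT4⟩ : ∃ T ⊆ A, (G.induce (T : Set V)).Connected ∧ 4 ≤ T.card := by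
      simpa [IsGenIndepSet] using hA
    obtain ⟨u₀, K₀, hK₀, hK₀3⟩ := exists_isBranch_of_four_le_card (hT4.trans (card_le_card hTA))
    obtain ⟨u, K, hK, hK3, hKind⟩ := hK₀.exists_isGenIndepSet hG hK₀3
    have hB : insert u K ⊆ A := insert_subset hK.mem hK.subset
    obtain ⟨S, hSA, hSind, hScard⟩ :=
      ih (A \ insert u K) (sdiff_ssubset hB (insert_nonempty u K))
    have hSK : Disjoint S K :=
      Finset.disjoint_left.mpr fun _ hxS hxK => (mem_sdiff.mp (hSA hxS)).2 (mem_insert_of_mem hxK)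
    refine ⟨S ∪ K, union_subset (hSA.trans sdiff_subset) hK.subset,
      hSind.union hKind fun x hxK y hyS hxy => ?_, ?_⟩
    · obtain ⟨hyA, hyB⟩ := mem_sdiff.mp (hSA hyS)
      rcases hK.adj_mem x hxK y hyA hxy with hyK | rfl
      exacts [hyB (mem_insert_of_mem hyK), hyB (mem_insert_self y K)]
    · have hAcard := card_sdiff_add_card_eq_card hB
      rw [card_insert_of_notMem hK.notMem] at hAcard
      rw [card_union_of_disjoint hSK]
      omega

theorem card_le_genIndepNum [Fintype V] {k : ℕ} {S : Finset V} (hS : G.IsGenIndepSet k S) :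
    S.card ≤ G.genIndepNum k :=
  le_csSup ⟨Fintype.card V, by rintro _ ⟨S', -, rfl⟩; exact card_le_univ S'⟩ ⟨S, hS, rfl⟩

end SimpleGraph

/-- If `F` is an acyclic graph (forest) on `n` vertices, then `α₄(F) ≥ 3n/4`. -/
theorem genIndepNum_forest_ge {V : Type*} [Fintype V] (G : SimpleGraph V)
    (hacyc : G.IsAcyclic) :
    (G.genIndepNum 4 : ℚ) ≥ 3 * (Nat.card V : ℚ) / 4 := by
  obtain ⟨S, -, hS, hcard⟩ := hacyc.exists_isGenIndepSet_subset Finset.univ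
  have h : 3 * Nat.card V ≤ 4 * G.genIndepNum 4 := by
    rw [Nat.card_eq_fintype_card, ← Finset.card_univ]
    exact hcard.trans (Nat.mul_le_mul_left 4 (SimpleGraph.card_le_genIndepNum hS))
  have hq : (3 * Nat.card V : ℚ) ≤ 4 * G.genIndepNum 4 := by exact_mod_cast h
  linarith
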